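/- arXiv:math/0005015 — 4 statements merged into one kernel-verified Lean document; each statement's English description precedes it below -/
import Mathlib

section
/- Let p be a prime number and s a complex number. The function x ↦ ‖x‖_p^s (the complex power of the real number ‖x‖_p) is integrable on ℤ_p with respect to the Haar measure μ if and only if Re(s) > -1. -/
open MeasureTheory

noncomputable instance (p : ℕ) [Fact p.Prime] : MeasurableSpace ℚ_[p] := borel _
instance (p : ℕ) [Fact p.Prime] : BorelSpace ℚ_[p] := ⟨rfl⟩

/-!
The sets `p^n ℤ_p = {‖x‖ ≤ p^{-n}}` are subgroups of index `p^n` in `ℤ_p`, so translation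
invariance forces `μ (p^n ℤ_p) = p^{-n} μ ℤ_p`. Hence the shell `{‖x‖ = p^{-n}}` has measure
`p^{-n} (1 - p⁻¹) μ ℤ_p`, and since `‖x‖^s` has absolute value `p^{-n Re s}` there,
`∫_{ℤ_p} ‖‖x‖^s‖ = (1 - p⁻¹) μ ℤ_p ∑ₙ (p^{-(Re s + 1)})^n`, a geometric series that converges
exactly when `Re s > -1`.
-/

open Metric Set
open scoped ENNReal

theorem ENNReal.tsum_pow_mul_lt_top_iff {r c : ℝ≥0∞} (hc₀ : c ≠ 0) (hc : c ≠ ∞) :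
    ∑' n : ℕ, r ^ n * c < ∞ ↔ r < 1 := by
  rw [ENNReal.tsum_mul_right, ENNReal.mul_lt_top_iff, ← tsum_geometric_lt_top]
  simp [hc₀, hc.lt_top]

theorem enorm_cpow_zpow_neg_mul_inv_pow {x : ℝ} (hx : 0 < x) (s : ℂ) (n : ℕ) :
    ‖((x ^ (-n : ℤ) : ℝ) : ℂ) ^ s‖ₑ * (ENNReal.ofReal x)⁻¹ ^ n =
      ENNReal.ofReal (x ^ (-(s.re + 1))) ^ n := by
  rw [← ofReal_norm, Complex.norm_cpow_eq_rpow_re_of_pos (zpow_pos hx _),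
    ← ENNReal.ofReal_inv_of_pos hx, ← ENNReal.ofReal_pow (inv_nonneg.2 hx.le),
    ← ENNReal.ofReal_mul (by positivity), ← ENNReal.ofReal_pow (by positivity)]
  congr 1
  rw [← Real.rpow_intCast, ← Real.rpow_mul hx.le, inv_pow, ← Real.rpow_natCast,
    ← Real.rpow_neg hx.le, ← Real.rpow_add hx, ← Real.rpow_mul_natCast hx.le]
  congr 1
  push_cast
  ring

noncomputable instance (p : ℕ) [Fact p.Prime] : MeasurableSpace ℤ_[p] :=
  Subtype.instMeasurableSpace

instance (p : ℕ) [Fact p.Prime] : BorelSpace ℤ_[p] := Subtype.borelSpace _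

namespace PadicInt

variable {p : ℕ} [Fact p.Prime]

theorem index_span_p_pow (n : ℕ) :
    (Ideal.span {(p : ℤ_[p]) ^ n}).toAddSubgroup.index = p ^ n := by
  rw [← ker_toZModPow, AddSubgroup.index_eq_card]
  exact (Nat.card_congr (RingHom.quotientKerEquivOfSurjective
    (ZMod.ringHom_surjective (toZModPow n))).toEquiv).trans (Nat.card_zmod _)

theorem measurableSet_span_p_pow (n : ℕ) :
    MeasurableSet ((Ideal.span {(p : ℤ_[p]) ^ n} : Ideal ℤ_[p]) : Set ℤ_[p]) := by
  have h : ((Ideal.span {(p : ℤ_[p]) ^ n} : Ideal ℤ_[p]) : Set ℤ_[p]) =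
      {x | ‖x‖ ≤ (p : ℝ) ^ (-n : ℤ)} := by
    ext x
    exact (norm_le_pow_iff_mem_span_pow x n).symm
  exact h ▸ (isClosed_le continuous_norm continuous_const).measurableSet

theorem natCast_pow_mul_measure_span_p_pow (ν : Measure ℤ_[p]) [ν.IsAddLeftInvariant] (n : ℕ) :
    (p : ℝ≥0∞) ^ n * ν (Ideal.span {(p : ℤ_[p]) ^ n}) = ν univ := by
  have : (Ideal.span {(p : ℤ_[p]) ^ n}).toAddSubgroup.FiniteIndex :=
    ⟨by rw [index_span_p_pow]; exact pow_ne_zero _ (Fact.out : p.Prime).ne_zero⟩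
  have key := AddSubgroup.index_mul_measure (Ideal.span {(p : ℤ_[p]) ^ n}).toAddSubgroup
    (measurableSet_span_p_pow n) ν
  rwa [index_span_p_pow, Nat.cast_pow] at key

theorem measurableEmbedding_coeRingHom :
    MeasurableEmbedding (Coe.ringHom : ℤ_[p] →+* ℚ_[p]) :=
  (isClosed_le continuous_norm continuous_const).isClosedEmbedding_subtypeVal.measurableEmbedding

theorem range_coeRingHom : range (Coe.ringHom : ℤ_[p] →+* ℚ_[p]) = closedBall 0 1 := by
  ext x
  exact ⟨fun ⟨y, hy⟩ => mem_closedBall_zero_iff.2 (hy ▸ y.2),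
    fun hx => ⟨⟨x, mem_closedBall_zero_iff.1 hx⟩, rfl⟩⟩

theorem image_coeRingHom_span_p_pow (n : ℕ) :
    (Coe.ringHom : ℤ_[p] →+* ℚ_[p]) '' (Ideal.span {(p : ℤ_[p]) ^ n} : Set ℤ_[p]) =
      closedBall 0 ((p : ℝ) ^ (-n : ℤ)) := by
  ext x
  constructor
  · rintro ⟨y, hy, rfl⟩
    exact mem_closedBall_zero_iff.2 ((norm_le_pow_iff_mem_span_pow y n).2 hy)
  · intro hx
    rw [mem_closedBall_zero_iff] at hx
    have hx₁ : ‖x‖ ≤ 1 :=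
      hx.trans (zpow_le_one_of_nonpos₀ (mod_cast (Fact.out : p.Prime).one_le) (by simp))
    exact ⟨⟨x, hx₁⟩, (norm_le_pow_iff_mem_span_pow _ n).1 hx, rfl⟩

end PadicInt

namespace Padic

variable {p : ℕ} [Fact p.Prime]

private theorem one_lt_p : (1 : ℝ) < p := mod_cast (Fact.out : p.Prime).one_lt

theorem natCast_pow_mul_measure_closedBall (μ : Measure ℚ_[p]) [μ.IsAddLeftInvariant] (n : ℕ) :
    (p : ℝ≥0∞) ^ n * μ (closedBall 0 ((p : ℝ) ^ (-n : ℤ))) = μ (closedBall 0 1) := by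
  let ι : ℤ_[p] →+ ℚ_[p] := (PadicInt.Coe.ringHom : ℤ_[p] →+* ℚ_[p])
  have hι : MeasurableEmbedding ι := PadicInt.measurableEmbedding_coeRingHom
  have := Measure.IsAddLeftInvariant.comap μ hι
  have key := PadicInt.natCast_pow_mul_measure_span_p_pow (μ.comap ι) n
  rwa [hι.comap_apply, hι.comap_apply, image_univ, AddMonoidHom.coe_coe,
    PadicInt.image_coeRingHom_span_p_pow, PadicInt.range_coeRingHom] at key

theorem measure_closedBall_natCast_zpow (μ : Measure ℚ_[p]) [μ.IsAddLeftInvariant] (n : ℕ) :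
    μ (closedBall 0 ((p : ℝ) ^ (-n : ℤ))) = (p : ℝ≥0∞)⁻¹ ^ n * μ (closedBall 0 1) := by
  rw [← natCast_pow_mul_measure_closedBall μ n, ← mul_assoc, ← mul_pow,
    ENNReal.inv_mul_cancel (by simp [(Fact.out : p.Prime).ne_zero]) (by simp), one_pow, one_mul]

theorem sphere_zpow_eq_closedBall_sdiff (n : ℤ) :
    sphere (0 : ℚ_[p]) ((p : ℝ) ^ n) =
      closedBall 0 ((p : ℝ) ^ n) \ closedBall 0 ((p : ℝ) ^ (n - 1)) := by
  ext x
  rw [mem_sdiff, mem_sphere_zero_iff_norm, mem_closedBall_zero_iff, mem_closedBall_zero_iff,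
    norm_le_pow_iff_norm_lt_pow_add_one x (n - 1), sub_add_cancel, not_lt, le_antisymm_iff]

theorem measure_sphere_natCast_zpow (μ : Measure ℚ_[p]) [μ.IsAddHaarMeasure] (n : ℕ) :
    μ (sphere 0 ((p : ℝ) ^ (-n : ℤ))) =
      (p : ℝ≥0∞)⁻¹ ^ n * ((1 - (p : ℝ≥0∞)⁻¹) * μ (closedBall 0 1)) := by
  have hp : (p : ℝ≥0∞)⁻¹ ^ n ≠ ∞ := by simp [(Fact.out : p.Prime).ne_zero]
  rw [sphere_zpow_eq_closedBall_sdiff, measure_sdiff, measure_closedBall_natCast_zpow,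
    show -(n : ℤ) - 1 = -((n + 1 : ℕ) : ℤ) by push_cast; ring, measure_closedBall_natCast_zpow,
    pow_succ, ← mul_assoc, ENNReal.mul_sub fun _ _ => hp, mul_one,
    ENNReal.sub_mul fun _ _ => (isCompact_closedBall 0 1).measure_ne_top]
  · exact closedBall_subset_closedBall (zpow_le_zpow_right₀ one_lt_p.le (by omega))
  · exact measurableSet_closedBall.nullMeasurableSet
  · exact (isCompact_closedBall _ _).measure_ne_top

theorem closedBall_one_sdiff_zero_eq_iUnion_sphere :
    closedBall (0 : ℚ_[p]) 1 \ {0} = ⋃ n : ℕ, sphere 0 ((p : ℝ) ^ (-n : ℤ)) := by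
  ext x
  simp only [mem_sdiff, mem_closedBall_zero_iff, mem_singleton_iff, mem_iUnion,
    mem_sphere_zero_iff_norm]
  constructor
  · rintro ⟨hx₁, hx₀⟩
    refine ⟨x.valuation.toNat, ?_⟩
    rw [norm_eq_zpow_neg_valuation hx₀,
      Int.toNat_of_nonneg ((norm_le_one_iff_val_nonneg x).1 hx₁)]
  · rintro ⟨n, hn⟩
    refine ⟨hn ▸ zpow_le_one_of_nonpos₀ one_lt_p.le (by omega), fun hx₀ => ?_⟩
    rw [hx₀, norm_zero] at hn
    exact (zpow_pos (zero_lt_one.trans one_lt_p) _).ne hn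

theorem pairwise_disjoint_sphere_natCast_zpow :
    Pairwise (Function.onFun Disjoint fun n : ℕ => sphere (0 : ℚ_[p]) ((p : ℝ) ^ (-n : ℤ))) := by
  intro m n hmn
  refine Set.disjoint_left.2 fun x hm hn => hmn ?_
  rw [mem_sphere_zero_iff_norm] at hm hn
  rw [hm, zpow_right_inj₀ (zero_lt_one.trans one_lt_p) one_lt_p.ne'] at hn
  omega

theorem setLIntegral_closedBall_one_comp_norm (μ : Measure ℚ_[p]) [NullSingletonClass μ]
    (g : ℝ → ℝ≥0∞) :
    ∫⁻ x in closedBall 0 1, g ‖x‖ ∂μ =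
      ∑' n : ℕ, g ((p : ℝ) ^ (-n : ℤ)) * μ (sphere 0 ((p : ℝ) ^ (-n : ℤ))) := by
  rw [← setLIntegral_congr (sdiff_null_ae_eq_self (measure_singleton 0)),
    closedBall_one_sdiff_zero_eq_iUnion_sphere,
    lintegral_iUnion (fun _ => isClosed_sphere.measurableSet) pairwise_disjoint_sphere_natCast_zpow]
  refine tsum_congr fun n => ?_
  rw [← setLIntegral_const]
  exact setLIntegral_congr_fun isClosed_sphere.measurableSet
    fun x hx => by rw [mem_sphere_zero_iff_norm.1 hx]

end Padic

theorem integrableOn_padic_norm_cpow_iff_general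
    (p : ℕ) [Fact p.Prime] (μ : Measure ℚ_[p]) [μ.IsAddHaarMeasure] (s : ℂ) :
    IntegrableOn (fun x : ℚ_[p] => (‖x‖ : ℂ) ^ s) {x : ℚ_[p] | ‖x‖ ≤ 1} μ ↔
      -1 < s.re := by
  have hp : (1 : ℝ) < p := Padic.one_lt_p
  have hball : {x : ℚ_[p] | ‖x‖ ≤ 1} = closedBall 0 1 := by ext; simp
  have hmeas : Measurable fun x : ℚ_[p] => (‖x‖ : ℂ) ^ s := by fun_prop
  rw [hball, IntegrableOn, Integrable, and_iff_right hmeas.aestronglyMeasurable,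
    HasFiniteIntegral, Padic.setLIntegral_closedBall_one_comp_norm μ fun r => ‖(r : ℂ) ^ s‖ₑ]
  simp_rw [Padic.measure_sphere_natCast_zpow, ← mul_assoc, ← ENNReal.ofReal_natCast,
    enorm_cpow_zpow_neg_mul_inv_pow (zero_lt_one.trans hp), mul_assoc]
  have hinv : (ENNReal.ofReal p)⁻¹ < 1 := by simpa using hp
  have hc₀ : (1 - (ENNReal.ofReal p)⁻¹) * μ (closedBall 0 1) ≠ 0 :=
    mul_ne_zero (tsub_pos_of_lt hinv).ne' (measure_closedBall_pos μ 0 one_pos).ne'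
  have hc : (1 - (ENNReal.ofReal p)⁻¹) * μ (closedBall 0 1) ≠ ∞ :=
    ENNReal.mul_ne_top (by simp) (isCompact_closedBall 0 1).measure_ne_top
  rw [ENNReal.tsum_pow_mul_lt_top_iff hc₀ hc, ENNReal.ofReal_lt_one]
  simpa [neg_lt_iff_pos_add'] using Real.rpow_lt_rpow_left_iff hp (y := -(s.re + 1)) (z := 0)

/-- The function `x ↦ ‖x‖^s` is integrable on `ℤ_p` (with respect to the Haar
measure `μ` on `ℚ_p` normalized by `μ(ℤ_p) = 1`) if and only if `Re s > -1`. -/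
theorem integrableOn_padic_norm_cpow_iff
    (p : ℕ) [Fact p.Prime] (μ : Measure ℚ_[p]) [μ.IsAddHaarMeasure]
    (hμ : μ {x : ℚ_[p] | ‖x‖ ≤ 1} = 1) (s : ℂ) :
    IntegrableOn (fun x : ℚ_[p] => (‖x‖ : ℂ) ^ s) {x : ℚ_[p] | ‖x‖ ≤ 1} μ ↔
      -1 < s.re :=
  integrableOn_padic_norm_cpow_iff_general p μ s
end

section
/- Let p be a prime number and s a complex number with Re(s) > -1. Then ∫_{x ∈ ℤ_p, ‖x‖_p ≤ 1/p} ‖x‖_p^s dμ(x) = (1/p) · (p - 1)/(p^{s+1} - 1), where p^{s+1} denotes the complex power of the real number p. -/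
open MeasureTheory

/-!
Reduction modulo `p ^ n` splits `ℤ_[p]` into `p ^ n` translates of the ball `‖x‖ ≤ p ^ (-n)`, so
by translation invariance that ball has measure `p ^ (-n)` and the sphere `‖x‖ = p ^ (-n)` has
measure `p ^ (-n) * (1 - p⁻¹)`. On that sphere `‖x‖ ^ s` is the constant `p ^ (-n * s)`, so up to
the null set `{0}` the integral over `‖x‖ ≤ p⁻¹` is the geometric series
`∑_{n ≥ 1} (1 - p⁻¹) * p ^ (-n * (s + 1))`, which converges absolutely because `Re s > -1`.
-/

open Metric Function

section SphereIntegral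

variable {E F : Type*} [NormedAddCommGroup E] [MeasurableSpace E] [OpensMeasurableSpace E]
  [NormedAddCommGroup F] (μ : Measure E) (f : ℝ → F) (r : ℝ)

theorem setIntegral_sphere_zero_comp_norm [NormedSpace ℝ F] [CompleteSpace F] :
    ∫ x in sphere (0 : E) r, f ‖x‖ ∂μ = μ.real (sphere 0 r) • f r := by
  rw [setIntegral_congr_fun isClosed_sphere.measurableSet
    fun x hx => by rw [mem_sphere_zero_iff_norm.1 hx], setIntegral_const]

theorem integrableOn_sphere_zero_comp_norm [ProperSpace E] [IsFiniteMeasureOnCompacts μ] :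
    IntegrableOn (fun x => f ‖x‖) (sphere (0 : E) r) μ := by
  rw [integrableOn_congr_fun (fun x hx => by rw [mem_sphere_zero_iff_norm.1 hx])
    isClosed_sphere.measurableSet]
  exact integrableOn_const (isCompact_sphere 0 r).measure_lt_top.ne

theorem integral_norm_sphere_zero_comp_norm [NormedSpace ℝ F] [CompleteSpace F] :
    ∫ x in sphere (0 : E) r, ‖f ‖x‖‖ ∂μ = ‖∫ x in sphere (0 : E) r, f ‖x‖ ∂μ‖ := by
  rw [setIntegral_sphere_zero_comp_norm μ (fun t => ‖f t‖), setIntegral_sphere_zero_comp_norm,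
    norm_smul, Real.norm_of_nonneg measureReal_nonneg, smul_eq_mul]

end SphereIntegral

theorem Metric.pairwise_disjoint_sphere {X ι : Type*} [PseudoMetricSpace X] (x : X) {r : ι → ℝ}
    (hr : Injective r) : Pairwise (Disjoint on fun i => sphere x (r i)) :=
  fun _ _ hij => Set.disjoint_left.2 fun _ hi hj => hij (hr ((mem_sphere.1 hi).symm.trans hj))

theorem Complex.ofReal_natCast_zpow_neg_cpow (p n : ℕ) (s : ℂ) :
    ((((p : ℝ) ^ (-n : ℤ) : ℝ)) : ℂ) ^ s = ((p : ℂ) ^ s)⁻¹ ^ n := by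
  have harg : ((p : ℂ) ^ n).arg ≠ Real.pi := by
    rw [← Nat.cast_pow, Complex.natCast_arg]; exact Real.pi_ne_zero.symm
  push_cast
  rw [zpow_neg, zpow_natCast, Complex.inv_cpow _ _ harg, ← Complex.natCast_cpow_natCast_mul,
    Complex.cpow_nat_mul, inv_pow]

theorem Complex.norm_inv_natCast_cpow_add_one_lt_one {n : ℕ} (hn : 1 < n) {s : ℂ}
    (hs : -1 < s.re) : ‖((n : ℂ) ^ (s + 1))⁻¹‖ < 1 := by
  rw [norm_inv, Complex.norm_natCast_cpow_of_pos (by omega)]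
  exact inv_lt_one_of_one_lt₀ (Real.one_lt_rpow (by exact_mod_cast hn) (by rw [Complex.add_re, Complex.one_re]; linarith))

namespace PadicInt

variable {p : ℕ} [Fact p.Prime]

theorem norm_sub_natCast_val_le_iff {n : ℕ} {x : ℤ_[p]} {a : ZMod (p ^ n)} :
    ‖x - a.val‖ ≤ (p : ℝ) ^ (-n : ℤ) ↔ toZModPow n x = a := by
  rw [norm_le_pow_iff_mem_span_pow, ← ker_toZModPow, RingHom.mem_ker, map_sub, map_natCast,
    ZMod.natCast_zmod_val, sub_eq_zero]

end PadicInt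

namespace Padic

variable {p : ℕ} [hp : Fact p.Prime]

theorem mem_closedBall_natCast_val_iff {n : ℕ} {x : ℚ_[p]} {a : ZMod (p ^ n)} :
    x ∈ closedBall (a.val : ℚ_[p]) ((p : ℝ) ^ (-n : ℤ)) ↔
      ∃ hx : ‖x‖ ≤ 1, PadicInt.toZModPow n ⟨x, hx⟩ = a := by
  rw [mem_closedBall, dist_eq_norm]
  constructor
  · intro h
    have hr : (p : ℝ) ^ (-n : ℤ) ≤ 1 :=
      zpow_le_one_of_nonpos₀ (by exact_mod_cast hp.out.one_le) (by omega)
    have hx : ‖x‖ ≤ 1 := by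
      calc ‖x‖ = ‖(x - a.val) + a.val‖ := by rw [sub_add_cancel]
        _ ≤ max ‖x - a.val‖ ‖(a.val : ℚ_[p])‖ := nonarchimedean _ _
        _ ≤ 1 := max_le (h.trans hr) (IsUltrametricDist.norm_natCast_le_one ℚ_[p] _)
    exact ⟨hx, PadicInt.norm_sub_natCast_val_le_iff.1 h⟩
  · rintro ⟨hx, rfl⟩
    exact PadicInt.norm_sub_natCast_val_le_iff.2 rfl

theorem closedBall_zero_one_eq_iUnion (n : ℕ) :
    closedBall (0 : ℚ_[p]) 1 =
      ⋃ a : ZMod (p ^ n), closedBall (a.val : ℚ_[p]) ((p : ℝ) ^ (-n : ℤ)) := by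
  ext x
  simp only [Set.mem_iUnion, mem_closedBall_natCast_val_iff, mem_closedBall_zero_iff]
  exact ⟨fun hx => ⟨_, hx, rfl⟩, fun ⟨_, hx, _⟩ => hx⟩

theorem pairwise_disjoint_closedBall_natCast_val (n : ℕ) :
    Pairwise (Disjoint on fun a : ZMod (p ^ n) =>
      closedBall (a.val : ℚ_[p]) ((p : ℝ) ^ (-n : ℤ))) := by
  intro a b hab
  refine Set.disjoint_left.2 fun x hxa hxb => hab ?_
  obtain ⟨hx, rfl⟩ := mem_closedBall_natCast_val_iff.1 hxa
  obtain ⟨_, rfl⟩ := mem_closedBall_natCast_val_iff.1 hxb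
  rfl

theorem ball_zero_zpow_eq_closedBall (n : ℕ) :
    ball (0 : ℚ_[p]) ((p : ℝ) ^ (-n : ℤ)) = closedBall 0 ((p : ℝ) ^ (-(n + 1 : ℕ) : ℤ)) := by
  ext x
  rw [mem_ball_zero_iff, mem_closedBall_zero_iff, norm_le_pow_iff_norm_lt_pow_add_one]
  push_cast
  ring_nf

theorem closedBall_zero_zpow_eq_insert_iUnion_sphere (k : ℕ) :
    closedBall (0 : ℚ_[p]) ((p : ℝ) ^ (-k : ℤ)) =
      insert 0 (⋃ n : ℕ, sphere 0 ((p : ℝ) ^ (-(k + n : ℕ) : ℤ))) := by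
  have hp1 : (1 : ℝ) < p := by exact_mod_cast hp.out.one_lt
  ext x
  rcases eq_or_ne x 0 with rfl | hx
  · simp
  simp only [mem_closedBall_zero_iff, Set.mem_insert_iff, hx, Set.mem_iUnion,
    mem_sphere_zero_iff_norm, norm_eq_zpow_neg_valuation hx, false_or,
    zpow_le_zpow_iff_right₀ hp1, (zpow_right_injective₀ (by positivity) hp1.ne').eq_iff]
  exact ⟨fun h => ⟨(x.valuation - k).toNat, by omega⟩, fun ⟨n, hn⟩ => by omega⟩

variable (μ : Measure ℚ_[p]) [μ.IsAddHaarMeasure] (hμ : μ (closedBall 0 1) = 1)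
include hμ

theorem measure_closedBall_zero_zpow (n : ℕ) :
    μ (closedBall 0 ((p : ℝ) ^ (-n : ℤ))) = ((p : ENNReal) ^ n)⁻¹ := by
  have : NeZero (p ^ n) := ⟨pow_ne_zero n hp.out.ne_zero⟩
  rw [closedBall_zero_one_eq_iUnion n, measure_iUnion (pairwise_disjoint_closedBall_natCast_val n)
    (fun _ => measurableSet_closedBall), tsum_fintype] at hμ
  simp only [Measure.addHaar_closedBall_center, Finset.sum_const, Finset.card_univ, ZMod.card,
    nsmul_eq_mul, Nat.cast_pow] at hμ
  exact ENNReal.eq_inv_of_mul_eq_one_left (by rwa [mul_comm])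

theorem measureReal_closedBall_zero_zpow (n : ℕ) :
    μ.real (closedBall 0 ((p : ℝ) ^ (-n : ℤ))) = (p : ℝ) ^ (-n : ℤ) := by
  rw [measureReal_def, measure_closedBall_zero_zpow μ hμ n]
  simp

theorem measureReal_sphere_zero_zpow (n : ℕ) :
    μ.real (sphere 0 ((p : ℝ) ^ (-n : ℤ))) = (p : ℝ) ^ (-n : ℤ) * (1 - (p : ℝ)⁻¹) := by
  rw [← closedBall_sdiff_ball, ball_zero_zpow_eq_closedBall,
    measureReal_sdiff (ball_zero_zpow_eq_closedBall (p := p) n ▸ ball_subset_closedBall)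
      measurableSet_closedBall (measure_closedBall_lt_top).ne,
    measureReal_closedBall_zero_zpow μ hμ, measureReal_closedBall_zero_zpow μ hμ,
    zpow_neg, zpow_neg, zpow_natCast, zpow_natCast, pow_succ, mul_inv]
  ring

theorem setIntegral_sphere_zero_zpow_norm_cpow (s : ℂ) (n : ℕ) :
    ∫ x in sphere 0 ((p : ℝ) ^ (-n : ℤ)), (‖x‖ : ℂ) ^ s ∂μ =
      (1 - (p : ℂ)⁻¹) * ((p : ℂ) ^ (s + 1))⁻¹ ^ n := by
  have hp0 : (p : ℂ) ≠ 0 := by exact_mod_cast hp.out.ne_zero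
  rw [setIntegral_sphere_zero_comp_norm μ (fun t : ℝ => (t : ℂ) ^ s),
    measureReal_sphere_zero_zpow μ hμ, Complex.ofReal_natCast_zpow_neg_cpow,
    Complex.cpow_add _ _ hp0, Complex.cpow_one, Complex.real_smul]
  push_cast
  rw [zpow_neg, zpow_natCast, mul_inv, mul_pow, inv_pow]
  ring

theorem hasSum_setIntegral_closedBall_zero_zpow_norm_cpow {s : ℂ} (hs : -1 < s.re) (k : ℕ) :
    HasSum (fun n : ℕ => (1 - (p : ℂ)⁻¹) * ((p : ℂ) ^ (s + 1))⁻¹ ^ (k + n))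
      (∫ x in closedBall 0 ((p : ℝ) ^ (-k : ℤ)), (‖x‖ : ℂ) ^ s ∂μ) := by
  have hp1 : (1 : ℝ) < p := by exact_mod_cast hp.out.one_lt
  have hradius : Injective fun n : ℕ => (p : ℝ) ^ (-(k + n : ℕ) : ℤ) :=
    (zpow_right_injective₀ (by positivity) hp1.ne').comp fun m n h => by omega
  have hnorm (n : ℕ) :
      ∫ x in sphere (0 : ℚ_[p]) ((p : ℝ) ^ (-(k + n : ℕ) : ℤ)), ‖(‖x‖ : ℂ) ^ s‖ ∂μ =
      ‖(1 - (p : ℂ)⁻¹) * ((p : ℂ) ^ (s + 1))⁻¹ ^ (k + n)‖ := by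
    rw [integral_norm_sphere_zero_comp_norm μ (fun t : ℝ => (t : ℂ) ^ s),
      setIntegral_sphere_zero_zpow_norm_cpow μ hμ]
  have hint : IntegrableOn (fun x : ℚ_[p] => (‖x‖ : ℂ) ^ s)
      (⋃ n : ℕ, sphere 0 ((p : ℝ) ^ (-(k + n : ℕ) : ℤ))) μ := by
    refine integrableOn_iUnion_of_summable_integral_norm
      (fun n => integrableOn_sphere_zero_comp_norm μ (fun t : ℝ => (t : ℂ) ^ s) _) ?_
    refine ((summable_norm_geometric_of_norm_lt_one
      (Complex.norm_inv_natCast_cpow_add_one_lt_one hp.out.one_lt hs)).mul_left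
      ‖(1 - (p : ℂ)⁻¹) * ((p : ℂ) ^ (s + 1))⁻¹ ^ k‖).congr fun n => ?_
    rw [hnorm, ← norm_mul, pow_add]
    ring_nf
  rw [closedBall_zero_zpow_eq_insert_iUnion_sphere, setIntegral_congr_set (insert_ae_eq_self _ _)]
  simpa only [setIntegral_sphere_zero_zpow_norm_cpow μ hμ] using
    hasSum_integral_iUnion (fun _ => isClosed_sphere.measurableSet)
      (pairwise_disjoint_sphere 0 hradius) hint

theorem setIntegral_closedBall_zero_zpow_norm_cpow {s : ℂ} (hs : -1 < s.re) (k : ℕ) :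
    ∫ x in closedBall 0 ((p : ℝ) ^ (-k : ℤ)), (‖x‖ : ℂ) ^ s ∂μ =
      (1 - (p : ℂ)⁻¹) * ((p : ℂ) ^ (s + 1))⁻¹ ^ k * (1 - ((p : ℂ) ^ (s + 1))⁻¹)⁻¹ := by
  have hgeom := (hasSum_geometric_of_norm_lt_one
    (Complex.norm_inv_natCast_cpow_add_one_lt_one hp.out.one_lt hs)).mul_left
      ((1 - (p : ℂ)⁻¹) * ((p : ℂ) ^ (s + 1))⁻¹ ^ k)
  simp_rw [mul_assoc, ← pow_add] at hgeom
  exact ((hasSum_setIntegral_closedBall_zero_zpow_norm_cpow μ hμ hs k).unique hgeom).trans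
    (mul_assoc _ _ _).symm

end Padic

/-- For `Re s > -1`,
`∫_{x ∈ ℤ_p, ‖x‖ ≤ 1/p} ‖x‖^s dμ(x) = (1/p) · (p-1)/(p^{s+1}-1)`,
where `μ` is the Haar measure on `ℚ_p` with `μ(ℤ_p) = 1`. -/
theorem integral_padic_norm_cpow_maximal_ideal
    (p : ℕ) [Fact p.Prime] (μ : Measure ℚ_[p]) [μ.IsAddHaarMeasure]
    (hμ : μ {x : ℚ_[p] | ‖x‖ ≤ 1} = 1) (s : ℂ) (hs : -1 < s.re) :
    ∫ x in {x : ℚ_[p] | ‖x‖ ≤ 1 / p}, (‖x‖ : ℂ) ^ s ∂μ =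
      (1 / p) * (((p : ℂ) - 1) / ((p : ℂ) ^ (s + 1) - 1)) := by
  have hball : {x : ℚ_[p] | ‖x‖ ≤ 1 / p} = closedBall 0 ((p : ℝ) ^ (-(1 : ℕ) : ℤ)) := by
    ext; simp
  have hunit : {x : ℚ_[p] | ‖x‖ ≤ 1} = closedBall 0 1 := by
    ext; simp
  rw [hball, Padic.setIntegral_closedBall_zero_zpow_norm_cpow μ (hunit ▸ hμ) hs 1]
  have hp0 : (p : ℂ) ≠ 0 := by exact_mod_cast (Fact.out : p.Prime).ne_zero
  have hw := Complex.norm_inv_natCast_cpow_add_one_lt_one (Fact.out : p.Prime).one_lt hs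
  have hQ0 : (p : ℂ) ^ (s + 1) ≠ 0 := fun h => hp0 ((Complex.cpow_eq_zero_iff _ _).1 h).1
  have hQ1 : (p : ℂ) ^ (s + 1) - 1 ≠ 0 := fun h => by simp [sub_eq_zero.1 h] at hw
  field_simp
end

section
/- Let p be a prime number and s a complex number with Re(s) > -1. Then ∫_{ℤ_p} ‖x‖_p^s dμ(x) = (1 - 1/p)/(1 - p^{-(s+1)}), where p^{-(s+1)} denotes the complex power of the real number p. -/
/-!
Up to the null set `{0}`, `ℤ_p` is the disjoint union of the spheres `‖x‖ = p⁻ⁿ`, `n ≥ 0`.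
The closed ball of radius `p⁻ⁿ` is the kernel of `ℤ_p → ℤ/pⁿℤ`, an additive subgroup of index
`pⁿ`, so by translation invariance it has measure `p⁻ⁿ`, and the sphere has measure
`(1 - p⁻¹) p⁻ⁿ`. On it `‖x‖ˢ = p^(-n s)`, so the integral is the geometric series
`∑ (1 - p⁻¹) (p^(-(s+1)))ⁿ`, which converges because `Re s > -1`.
-/

open MeasureTheory

open scoped ENNReal

namespace MeasureTheory

theorem hasSum_setIntegral_iUnion_of_eqOn_const {α E ι : Type*}
    [MeasurableSpace α] [NormedAddCommGroup E] [NormedSpace ℝ E] [CompleteSpace E] [Countable ι]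
    {μ : Measure α} {S : ι → Set α} {f : α → E} {c : ι → E} (hS : ∀ i, MeasurableSet (S i))
    (hd : Pairwise (Function.onFun Disjoint S)) (hf : ∀ i, Set.EqOn f (fun _ => c i) (S i))
    (hfin : ∀ i, μ (S i) ≠ ∞) (hsum : Summable fun i => μ.real (S i) * ‖c i‖) :
    HasSum (fun i => μ.real (S i) • c i) (∫ x in ⋃ i, S i, f x ∂μ) := by
  have hint : ∀ i, ∫ x in S i, f x ∂μ = μ.real (S i) • c i := fun i => by
    rw [setIntegral_congr_fun (hS i) (hf i), setIntegral_const]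
  have hnorm : ∀ i, ∫ x in S i, ‖f x‖ ∂μ = μ.real (S i) * ‖c i‖ := fun i => by
    rw [setIntegral_congr_fun (hS i) (fun x hx => congrArg norm (hf i hx)), setIntegral_const,
      smul_eq_mul]
  have hfS : IntegrableOn f (⋃ i, S i) μ := integrableOn_iUnion_of_summable_integral_norm
    (fun i => (integrableOn_const (hfin i)).congr_fun (hf i).symm (hS i)) (by simpa [hnorm])
  simpa only [hint] using hasSum_integral_iUnion hS hd hfS

lemma measure_setOf_norm_eq_ne_top {E : Type*} [NormedAddCommGroup E] [ProperSpace E]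
    [MeasurableSpace E] (μ : Measure E) [IsFiniteMeasureOnCompacts μ] (r : ℝ) :
    μ {x : E | ‖x‖ = r} ≠ ∞ :=
  IsCompact.measure_ne_top <| by simpa [Metric.sphere] using isCompact_sphere (0 : E) r

end MeasureTheory

lemma Complex.inv_natCast_pow_mul_cpow {p : ℕ} (hp : p ≠ 0) (n : ℕ) (s : ℂ) :
    ((p : ℂ) ^ n)⁻¹ * (((p : ℂ) ^ n)⁻¹) ^ s = ((p : ℂ) ^ (-(s + 1))) ^ n := by
  have hp' : (p : ℂ) ≠ 0 := Nat.cast_ne_zero.mpr hp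
  rw [inv_cpow _ _ (by rw [← Nat.cast_pow, natCast_arg]; exact Real.pi_ne_zero.symm),
    ← natCast_cpow_natCast_mul, ← cpow_natCast, ← mul_inv, ← cpow_add _ _ hp', ← cpow_nat_mul,
    ← cpow_neg]
  ring_nf

lemma Complex.norm_natCast_cpow_lt_one {p : ℕ} (hp : 1 < p) {s : ℂ} (hs : s.re < 0) :
    ‖(p : ℂ) ^ s‖ < 1 := by
  rw [norm_natCast_cpow_of_pos (by omega)]
  exact Real.rpow_lt_one_of_one_lt_of_neg (by exact_mod_cast hp) hs

namespace PadicInt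

variable {p : ℕ} [hp : Fact p.Prime]

noncomputable instance : MeasurableSpace ℤ_[p] := borel _

instance : BorelSpace ℤ_[p] := ⟨rfl⟩

lemma measurableEmbedding_coe : MeasurableEmbedding (fun x : ℤ_[p] => (x : ℚ_[p])) :=
  (Isometry.isClosedEmbedding (f := fun x : ℤ_[p] => (x : ℚ_[p])) fun _ _ => rfl
    ).measurableEmbedding

lemma index_ker_toZModPow (n : ℕ) :
    (toZModPow n : ℤ_[p] →+* ZMod (p ^ n)).toAddMonoidHom.ker.index = p ^ n := by
  rw [AddSubgroup.index_ker, AddMonoidHom.range_eq_top.mpr (ZMod.ringHom_surjective _)]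
  simp

lemma mem_ker_toZModPow_iff (n : ℕ) (x : ℤ_[p]) :
    x ∈ (toZModPow n : ℤ_[p] →+* ZMod (p ^ n)).toAddMonoidHom.ker ↔
      ‖x‖ ≤ (p : ℝ) ^ (-(n : ℤ)) := by
  rw [norm_le_pow_iff_mem_span_pow, ← ker_toZModPow]
  rfl

lemma coe_image_ker_toZModPow (n : ℕ) :
    (fun x : ℤ_[p] => (x : ℚ_[p])) '' (toZModPow n : ℤ_[p] →+* ZMod (p ^ n)).toAddMonoidHom.ker
      = {x : ℚ_[p] | ‖x‖ ≤ (p : ℝ) ^ (-(n : ℤ))} := by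
  ext x
  simp only [Set.mem_image, SetLike.mem_coe, mem_ker_toZModPow_iff, Set.mem_ofPred_eq]
  constructor
  · rintro ⟨y, hy, rfl⟩
    exact hy
  · intro hx
    have h1 : ‖x‖ ≤ 1 :=
      hx.trans (zpow_le_one_of_nonpos₀ (Nat.one_le_cast.mpr hp.1.one_le) (by omega))
    exact ⟨⟨x, h1⟩, hx, rfl⟩

end PadicInt

namespace Padic

variable {p : ℕ} [hp : Fact p.Prime]

lemma pow_mul_measure_norm_le_zpow (μ : Measure ℚ_[p]) [μ.IsAddLeftInvariant] (n : ℕ) :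
    (p : ℝ≥0∞) ^ n * μ {x | ‖x‖ ≤ (p : ℝ) ^ (-(n : ℤ))} = μ {x | ‖x‖ ≤ 1} := by
  let H := (PadicInt.toZModPow n : ℤ_[p] →+* ZMod (p ^ n)).toAddMonoidHom.ker
  have hemb := PadicInt.measurableEmbedding_coe (p := p)
  have : (μ.comap (fun x : ℤ_[p] => (x : ℚ_[p]))).IsAddLeftInvariant :=
    Measure.IsAddLeftInvariant.comap μ (f := PadicInt.Coe.ringHom.toAddMonoidHom) hemb
  have hH : IsClosed (H : Set ℤ_[p]) := by
    convert isClosed_le continuous_norm (continuous_const (y := (p : ℝ) ^ (-(n : ℤ))))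
    ext x
    exact PadicInt.mem_ker_toZModPow_iff n x
  have := H.index_mul_measure hH.measurableSet (μ.comap fun x : ℤ_[p] => (x : ℚ_[p]))
  rw [hemb.comap_apply, hemb.comap_apply, PadicInt.coe_image_ker_toZModPow,
    PadicInt.index_ker_toZModPow, Set.image_univ, Nat.cast_pow] at this
  rw [this]
  exact congrArg μ Subtype.range_coe_subtype

lemma measure_norm_le_zpow (μ : Measure ℚ_[p]) [μ.IsAddLeftInvariant]
    (hμ : μ {x | ‖x‖ ≤ 1} = 1) (n : ℕ) :
    μ {x | ‖x‖ ≤ (p : ℝ) ^ (-(n : ℤ))} = ((p : ℝ≥0∞) ^ n)⁻¹ :=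
  ENNReal.eq_inv_of_mul_eq_one_left <| by rw [mul_comm, pow_mul_measure_norm_le_zpow, hμ]

lemma norm_eq_zpow_iff (x : ℚ_[p]) (n : ℤ) :
    ‖x‖ = (p : ℝ) ^ n ↔ ‖x‖ ≤ (p : ℝ) ^ n ∧ ¬‖x‖ ≤ (p : ℝ) ^ (n - 1) := by
  rw [← norm_lt_pow_iff_norm_le_pow_sub_one, not_lt, le_antisymm_iff]

lemma setOf_norm_eq_zpow_natCast (n : ℕ) :
    {x : ℚ_[p] | ‖x‖ = (p : ℝ) ^ (-(n : ℤ))} =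
      {x | ‖x‖ ≤ (p : ℝ) ^ (-(n : ℤ))} \ {x | ‖x‖ ≤ (p : ℝ) ^ (-((n + 1 : ℕ) : ℤ))} := by
  ext x
  rw [Set.mem_ofPred_eq, norm_eq_zpow_iff, Nat.cast_succ, neg_add']
  rfl

lemma measureReal_norm_eq_zpow (μ : Measure ℚ_[p]) [μ.IsAddLeftInvariant]
    (hμ : μ {x | ‖x‖ ≤ 1} = 1) (n : ℕ) :
    μ.real {x | ‖x‖ = (p : ℝ) ^ (-(n : ℤ))} = (1 - (p : ℝ)⁻¹) * ((p : ℝ) ^ n)⁻¹ := by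
  have hsub : {x : ℚ_[p] | ‖x‖ ≤ (p : ℝ) ^ (-((n + 1 : ℕ) : ℤ))} ⊆
      {x | ‖x‖ ≤ (p : ℝ) ^ (-(n : ℤ))} := fun x (hx : ‖x‖ ≤ _) =>
    hx.trans <| zpow_le_zpow_right₀ (Nat.one_le_cast.mpr hp.1.one_le) (by push_cast; omega)
  rw [setOf_norm_eq_zpow_natCast, measureReal_sdiff hsub (measurableSet_le measurable_norm
    measurable_const) (by rw [measure_norm_le_zpow μ hμ]; simp [hp.1.ne_zero]), measureReal_def,
    measureReal_def, measure_norm_le_zpow μ hμ, measure_norm_le_zpow μ hμ]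
  simp only [ENNReal.toReal_inv, ENNReal.toReal_pow, ENNReal.toReal_natCast]
  field_simp
  ring

lemma pairwise_disjoint_setOf_norm_eq_zpow :
    Pairwise (Function.onFun Disjoint fun n : ℕ => {x : ℚ_[p] | ‖x‖ = (p : ℝ) ^ (-(n : ℤ))}) :=
  fun m n hmn => Set.disjoint_left.mpr fun x (hm : ‖x‖ = _) (hn : ‖x‖ = _) => hmn <| by
    have := zpow_right_injective₀ (Nat.cast_pos.mpr hp.1.pos : (0 : ℝ) < p)
      (Nat.one_lt_cast.mpr hp.1.one_lt).ne' (hm.symm.trans hn)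
    omega

lemma measureReal_norm_eq_zpow_smul_cpow (μ : Measure ℚ_[p]) [μ.IsAddLeftInvariant]
    (hμ : μ {x | ‖x‖ ≤ 1} = 1) (s : ℂ) (n : ℕ) :
    μ.real {x | ‖x‖ = (p : ℝ) ^ (-(n : ℤ))} • (((p : ℝ) ^ (-(n : ℤ)) : ℝ) : ℂ) ^ s =
      (1 - 1 / (p : ℂ)) * ((p : ℂ) ^ (-(s + 1))) ^ n := by
  rw [measureReal_norm_eq_zpow μ hμ n, Complex.real_smul]
  push_cast [zpow_neg, zpow_natCast]
  rw [mul_assoc, Complex.inv_natCast_pow_mul_cpow hp.1.ne_zero, one_div]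

lemma setOf_norm_le_one_sdiff_zero :
    {x : ℚ_[p] | ‖x‖ ≤ 1} \ {0} = ⋃ n : ℕ, {x : ℚ_[p] | ‖x‖ = (p : ℝ) ^ (-(n : ℤ))} := by
  ext x
  simp only [Set.mem_sdiff, Set.mem_ofPred_eq, Set.mem_singleton_iff, Set.mem_iUnion]
  constructor
  · rintro ⟨hx1, hx0⟩
    refine ⟨x.valuation.toNat, ?_⟩
    rw [norm_eq_zpow_neg_valuation hx0,
      Int.toNat_of_nonneg ((norm_le_one_iff_val_nonneg x).mp hx1)]
  · rintro ⟨n, hn⟩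
    refine ⟨hn.le.trans (zpow_le_one_of_nonpos₀ (Nat.one_le_cast.mpr hp.1.one_le) (by omega)), ?_⟩
    rintro rfl
    rw [norm_zero] at hn
    exact (zpow_pos (Nat.cast_pos.mpr hp.1.pos : (0 : ℝ) < p) _).ne hn

lemma setOf_norm_le_one_ae_eq_iUnion (μ : Measure ℚ_[p]) [μ.IsAddHaarMeasure] :
    {x : ℚ_[p] | ‖x‖ ≤ 1} =ᵐ[μ] ⋃ n : ℕ, {x : ℚ_[p] | ‖x‖ = (p : ℝ) ^ (-(n : ℤ))} := by
  rw [← setOf_norm_le_one_sdiff_zero]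
  exact (sdiff_null_ae_eq_self (measure_singleton 0)).symm

end Padic

/-- For `Re s > -1`, `∫_{ℤ_p} ‖x‖^s dμ(x) = (1 - 1/p)/(1 - p^{-(s+1)})`,
where `μ` is the Haar measure on `ℚ_p` with `μ(ℤ_p) = 1`. -/
theorem integral_padic_norm_cpow_integers
    (p : ℕ) [Fact p.Prime] (μ : Measure ℚ_[p]) [μ.IsAddHaarMeasure]
    (hμ : μ {x : ℚ_[p] | ‖x‖ ≤ 1} = 1) (s : ℂ) (hs : -1 < s.re) :
    ∫ x in {x : ℚ_[p] | ‖x‖ ≤ 1}, (‖x‖ : ℂ) ^ s ∂μ =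
      (1 - 1 / (p : ℂ)) / (1 - (p : ℂ) ^ (-(s + 1))) := by
  have hw : ‖(p : ℂ) ^ (-(s + 1))‖ < 1 :=
    Complex.norm_natCast_cpow_lt_one (Fact.out : p.Prime).one_lt (by simp; linarith)
  have hterm := Padic.measureReal_norm_eq_zpow_smul_cpow μ hμ s
  have hsum : Summable fun n : ℕ => μ.real {x : ℚ_[p] | ‖x‖ = (p : ℝ) ^ (-(n : ℤ))} *
      ‖(((p : ℝ) ^ (-(n : ℤ)) : ℝ) : ℂ) ^ s‖ := by
    refine ((summable_geometric_of_lt_one (norm_nonneg _) hw).mul_left ‖1 - 1 / (p : ℂ)‖).congr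
      fun n => ?_
    rw [← Real.norm_of_nonneg measureReal_nonneg, ← norm_smul, hterm, norm_mul, norm_pow]
  have hgeom := (hasSum_geometric_of_norm_lt_one hw).mul_left (1 - 1 / (p : ℂ))
  simp only [← hterm] at hgeom
  rw [setIntegral_congr_set (Padic.setOf_norm_le_one_ae_eq_iUnion μ), div_eq_mul_inv]
  refine (hasSum_setIntegral_iUnion_of_eqOn_const (fun n => ?_)
    Padic.pairwise_disjoint_setOf_norm_eq_zpow (fun n x hx => ?_)
    (fun n => measure_setOf_norm_eq_ne_top μ _) hsum).unique hgeom
  · exact measurableSet_eq_fun measurable_norm measurable_const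
  · exact congrArg (fun r : ℝ => (r : ℂ) ^ s) hx
end

section
/- Let p be a prime number and ψ a standard additive character of ℚ_p. Let u, ξ ∈ ℤ_p be units (‖u‖_p = ‖ξ‖_p = 1), and let d ≥ 2, n ≥ 1, e ≥ 1 be integers satisfying 2e ≥ nd and e + v_p(d) < nd, where v_p(d) denotes the p-adic valuation of d. Then ∫_{ξ + p^e ℤ_p} ψ(u·p^{-nd}·t^d) dμ(t) = 0. -/
/-!
Write `a = u p^{-nd}`, `v = v_p(d)` and pick `x₀` with `‖x₀‖ = p` and `ψ x₀ ≠ 1`. The shift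
`s = x₀ / (a d ξ^{d-1})` has `‖s‖ = p^{1+v-nd} ≤ p^{-e}`, so translation by `s` preserves the
disk. On the disk, `a (t + s)^d - a t^d` equals `x₀` up to an error of norm at most
`‖a‖ p^{-e} ‖s‖ = p^{1+v-e} ≤ 1` (as `e + v < nd ≤ 2e`), which `ψ` does not see.
Hence the integral `I` satisfies `I = ψ x₀ · I`, so `I = 0`.
-/

open MeasureTheory

/-- A standard additive character of `ℚ_p`: a continuous homomorphism from the
additive group of `ℚ_p` to the unit circle in `ℂ`, trivial on `ℤ_p` and
nontrivial at some point of norm `p`. -/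
structure IsStandardAddChar (p : ℕ) [Fact p.Prime] (ψ : ℚ_[p] → ℂ) : Prop where
  continuous : Continuous ψ
  map_add : ∀ x y : ℚ_[p], ψ (x + y) = ψ x * ψ y
  norm_eq_one : ∀ x : ℚ_[p], ‖ψ x‖ = 1
  trivial_on_int : ∀ x : ℚ_[p], ‖x‖ ≤ 1 → ψ x = 1
  nontrivial : ∃ x₀ : ℚ_[p], ‖x₀‖ = p ∧ ψ x₀ ≠ 1

open Metric Finset

theorem setIntegral_eq_zero_of_map_add_eq_smul {G E : Type*} [MeasurableSpace G] [AddGroup G]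
    [MeasurableAdd G] [NormedAddCommGroup E] [NormedSpace ℂ E] {μ : Measure G}
    [μ.IsAddRightInvariant] {D : Set G} {f : G → E} {s : G} {c : ℂ} (hD : MeasurableSet D)
    (hDs : (· + s) ⁻¹' D = D) (hc : c ≠ 1) (hf : ∀ t ∈ D, f (t + s) = c • f t) :
    ∫ t in D, f t ∂μ = 0 := by
  have hshift : ∫ t in D, f (t + s) ∂μ = ∫ t in D, f t ∂μ := by
    conv_lhs => rw [← hDs]
    exact (measurePreserving_add_right μ s).setIntegral_preimage_emb
      (measurableEmbedding_addRight s) f D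
  rw [setIntegral_congr_fun hD hf, integral_smul] at hshift
  have hfixed : (c - 1) • ∫ t in D, f t ∂μ = 0 := by rw [sub_smul, one_smul, hshift, sub_self]
  exact (smul_eq_zero.mp hfixed).resolve_left (sub_ne_zero.mpr hc)

theorem norm_pow_le_one {R : Type*} [SeminormedRing R] [NormOneClass R] {x : R} (hx : ‖x‖ ≤ 1)
    (n : ℕ) : ‖x ^ n‖ ≤ 1 :=
  (norm_pow_le x n).trans (pow_le_one₀ (norm_nonneg x) hx)

namespace IsUltrametricDist

theorem preimage_add_closedBall {E : Type*} [SeminormedAddCommGroup E] [IsUltrametricDist E]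
    {s : E} {r : ℝ} (hs : ‖s‖ ≤ r) (ξ : E) : (· + s) ⁻¹' closedBall ξ r = closedBall ξ r := by
  ext t
  have hball : closedBall t r = closedBall (t + s) r :=
    closedBall_eq_of_mem (by rwa [mem_closedBall_iff_norm, add_sub_cancel_left])
  rw [Set.mem_preimage, mem_closedBall_comm, ← hball, mem_closedBall_comm]

section Ring

variable {R : Type*} [SeminormedCommRing R] [NormOneClass R] [IsUltrametricDist R]

theorem norm_pow_sub_pow_le {x y : R} (hx : ‖x‖ ≤ 1) (hy : ‖y‖ ≤ 1) (n : ℕ) :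
    ‖x ^ n - y ^ n‖ ≤ ‖x - y‖ := by
  rw [← geom_sum₂_mul]
  refine (norm_mul_le _ _).trans (mul_le_of_le_one_left (norm_nonneg _) ?_)
  refine norm_sum_le_of_forall_le_of_nonneg zero_le_one fun i _ => ?_
  exact (norm_mul_le _ _).trans
    (mul_le_one₀ (norm_pow_le_one hx i) (norm_nonneg _) (norm_pow_le_one hy _))

theorem norm_pow_mul_pow_sub_pow_le {x y ξ : R} {r : ℝ} (hx : ‖x‖ ≤ 1) (hy : ‖y‖ ≤ 1)
    (hξ : ‖ξ‖ ≤ 1) (hxr : ‖x - ξ‖ ≤ r) (hyr : ‖y - ξ‖ ≤ r) (j k : ℕ) :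
    ‖x ^ j * y ^ k - ξ ^ (j + k)‖ ≤ r := by
  have hsplit : x ^ j * y ^ k - ξ ^ (j + k)
      = (x ^ j - ξ ^ j) * y ^ k + ξ ^ j * (y ^ k - ξ ^ k) := by
    ring
  rw [hsplit]
  refine (norm_add_le_max _ _).trans (max_le ?_ ?_) <;> refine (norm_mul_le _ _).trans ?_
  · exact (mul_le_of_le_one_right (norm_nonneg _) (norm_pow_le_one hy k)).trans
      ((norm_pow_sub_pow_le hx hξ j).trans hxr)
  · exact (mul_le_of_le_one_left (norm_nonneg _) (norm_pow_le_one hξ j)).trans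
      ((norm_pow_sub_pow_le hy hξ k).trans hyr)

theorem norm_pow_sub_pow_sub_mul_le {ξ x y : R} {r : ℝ} (hξ : ‖ξ‖ ≤ 1) (hr : r ≤ 1)
    (hx : x ∈ closedBall ξ r) (hy : y ∈ closedBall ξ r) (d : ℕ) :
    ‖y ^ d - x ^ d - d * ξ ^ (d - 1) * (y - x)‖ ≤ r * ‖y - x‖ := by
  have hunit : closedBall ξ r ⊆ closedBall 0 1 :=
    (closedBall_subset_closedBall hr).trans
      (closedBall_eq_of_mem (mem_closedBall_zero_iff.mpr hξ)).symm.subset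
  have hsum : y ^ d - x ^ d - d * ξ ^ (d - 1) * (y - x)
      = (∑ i ∈ range d, (y ^ i * x ^ (d - 1 - i) - ξ ^ (d - 1))) * (y - x) := by
    rw [sum_sub_distrib, sum_const, card_range, nsmul_eq_mul, sub_mul, geom_sum₂_mul]
  rw [hsum]
  refine (norm_mul_le _ _).trans (mul_le_mul_of_nonneg_right ?_ (norm_nonneg _))
  refine norm_sum_le_of_forall_le_of_nonneg (nonneg_of_mem_closedBall hx) fun i hi => ?_
  have hi' : i + (d - 1 - i) = d - 1 := by have := mem_range.mp hi; omega
  simpa only [hi'] using norm_pow_mul_pow_sub_pow_le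
    (mem_closedBall_zero_iff.mp (hunit hy)) (mem_closedBall_zero_iff.mp (hunit hx)) hξ
    (mem_closedBall_iff_norm.mp hy) (mem_closedBall_iff_norm.mp hx) i (d - 1 - i)

end Ring

end IsUltrametricDist

theorem IsStandardAddChar.map_eq_mul_of_norm_sub_le_one {p : ℕ} [Fact p.Prime] {ψ : ℚ_[p] → ℂ}
    (hψ : IsStandardAddChar p ψ) {x y z : ℚ_[p]} (h : ‖y - x - z‖ ≤ 1) : ψ y = ψ z * ψ x := by
  calc ψ y = ψ (x + z + (y - x - z)) := by congr 1; ring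
    _ = ψ z * ψ x := by rw [hψ.map_add, hψ.map_add, hψ.trivial_on_int _ h]; ring

theorem IsStandardAddChar.map_mul_add_pow {p : ℕ} [Fact p.Prime] {ψ : ℚ_[p] → ℂ}
    (hψ : IsStandardAddChar p ψ) {a ξ t s : ℚ_[p]} {r : ℝ} (hξ : ‖ξ‖ ≤ 1) (hr : r ≤ 1)
    (ht : t ∈ closedBall ξ r) (hs : ‖s‖ ≤ r) (has : ‖a‖ * (r * ‖s‖) ≤ 1) (d : ℕ) :
    ψ (a * (t + s) ^ d) = ψ (a * d * ξ ^ (d - 1) * s) * ψ (a * t ^ d) := by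
  have hts : t + s ∈ closedBall ξ r := by
    rwa [← IsUltrametricDist.preimage_add_closedBall hs ξ] at ht
  refine hψ.map_eq_mul_of_norm_sub_le_one (le_trans ?_ has)
  calc ‖a * (t + s) ^ d - a * t ^ d - a * d * ξ ^ (d - 1) * s‖
      = ‖a‖ * ‖(t + s) ^ d - t ^ d - d * ξ ^ (d - 1) * (t + s - t)‖ := by
        rw [← norm_mul]; ring_nf
    _ ≤ ‖a‖ * (r * ‖s‖) := by
        grw [IsUltrametricDist.norm_pow_sub_pow_sub_mul_le hξ hr ht hts, add_sub_cancel_left]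

theorem Padic.norm_natCast_eq_zpow_neg_padicValNat {p : ℕ} [Fact p.Prime] {d : ℕ} (hd : d ≠ 0) :
    ‖(d : ℚ_[p])‖ = (p : ℝ) ^ (-(padicValNat p d : ℤ)) := by
  rw [Padic.norm_eq_zpow_neg_valuation (mod_cast hd), Padic.valuation_natCast]

theorem integral_standard_char_on_disk_power_general
    (p : ℕ) [Fact p.Prime] (μ : Measure ℚ_[p]) [μ.IsAddHaarMeasure]
    (ψ : ℚ_[p] → ℂ) (hψ : IsStandardAddChar p ψ)
    (u ξ : ℚ_[p]) (hu : ‖u‖ = 1) (hξ : ‖ξ‖ = 1)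
    (d n e : ℕ)
    (h2e : n * d ≤ 2 * e) (hev : e + padicValNat p d < n * d) :
    ∫ t in {t : ℚ_[p] | ‖t - ξ‖ ≤ (p : ℝ) ^ (-(e : ℤ))},
        ψ (u * (p : ℚ_[p]) ^ (-(n * d : ℤ)) * t ^ d) ∂μ = 0 := by
  obtain ⟨x₀, hx₀, hψx₀⟩ := hψ.nontrivial
  have hp : (1 : ℝ) < p := mod_cast (Fact.out : p.Prime).one_lt
  have hd : d ≠ 0 := by rintro rfl; simp at hev
  set a : ℚ_[p] := u * (p : ℚ_[p]) ^ (-(n * d : ℤ))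
  set r : ℝ := (p : ℝ) ^ (-(e : ℤ))
  set b : ℚ_[p] := a * d * ξ ^ (d - 1)
  have ha : ‖a‖ = (p : ℝ) ^ (n * d : ℤ) := by
    rw [norm_mul, hu, one_mul, Padic.norm_p_zpow, neg_neg]
  have hb : ‖b‖ = (p : ℝ) ^ (n * d + -padicValNat p d : ℤ) := by
    rw [norm_mul, norm_mul, ha, Padic.norm_natCast_eq_zpow_neg_padicValNat hd, norm_pow, hξ,
      one_pow, mul_one, zpow_add₀ (by positivity)]
  set s : ℚ_[p] := x₀ / b
  have hs : ‖s‖ = (p : ℝ) ^ (1 + padicValNat p d - n * d : ℤ) := by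
    rw [norm_div, hx₀, hb, show (1 + padicValNat p d - n * d : ℤ) = 1 - (n * d + -padicValNat p d)
      by ring, zpow_sub₀ (by positivity), zpow_one]
  have hsr : ‖s‖ ≤ r := by
    rw [hs]; exact zpow_le_zpow_right₀ hp.le (by omega)
  have has : ‖a‖ * (r * ‖s‖) ≤ 1 := by
    rw [ha, hs, ← zpow_add₀ (by positivity), ← zpow_add₀ (by positivity)]
    exact zpow_le_one_of_nonpos₀ hp.le (by omega)
  have hdisk : {t : ℚ_[p] | ‖t - ξ‖ ≤ r} = closedBall ξ r :=
    Set.ext fun t => mem_closedBall_iff_norm.symm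
  rw [hdisk]
  refine setIntegral_eq_zero_of_map_add_eq_smul measurableSet_closedBall
    (IsUltrametricDist.preimage_add_closedBall hsr ξ) hψx₀ fun t ht => ?_
  have hbs : b * s = x₀ := mul_div_cancel₀ x₀ (norm_ne_zero_iff.mp (by rw [hb]; positivity))
  rw [← hbs]
  exact hψ.map_mul_add_pow hξ.le (zpow_le_one_of_nonpos₀ hp.le (by omega)) ht hsr has d

/-- For units `u`, `ξ` of `ℤ_p` and integers `d ≥ 2`, `n ≥ 1`, `e ≥ 1` with
`2e ≥ nd` and `e + v_p(d) < nd`, the integral of `ψ(u p^{-nd} t^d)` over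
the disk `ξ + p^e ℤ_p` vanishes. -/
theorem integral_standard_char_on_disk_power
    (p : ℕ) [Fact p.Prime] (μ : Measure ℚ_[p]) [μ.IsAddHaarMeasure]
    (hμ : μ {x : ℚ_[p] | ‖x‖ ≤ 1} = 1)
    (ψ : ℚ_[p] → ℂ) (hψ : IsStandardAddChar p ψ)
    (u ξ : ℚ_[p]) (hu : ‖u‖ = 1) (hξ : ‖ξ‖ = 1)
    (d n e : ℕ) (hd : 2 ≤ d) (hn : 1 ≤ n) (he : 1 ≤ e)
    (h2e : n * d ≤ 2 * e) (hev : e + padicValNat p d < n * d) :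
    ∫ t in {t : ℚ_[p] | ‖t - ξ‖ ≤ (p : ℝ) ^ (-(e : ℤ))},
        ψ (u * (p : ℚ_[p]) ^ (-(n * d : ℤ)) * t ^ d) ∂μ = 0 :=
  integral_standard_char_on_disk_power_general p μ ψ hψ u ξ hu hξ d n e h2e hev
end
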